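/- arXiv:math/9901086 — 2 statements merged into one kernel-verified Lean document; each statement's English description precedes it below -/
import Mathlib

section
/- (Injectivity of the Poisson operator.) Let a ∈ u(n) be a fixed diagonal matrix and let u, v : ℝ → u(n)_a^⊥ be Schwartz-class maps. If P_u(v) = 0 identically, then v = 0. -/
open Matrix Filter MeasureTheory
open scoped Classical

attribute [local instance] Matrix.normedAddCommGroup Matrix.normedSpace

/-- A map of `ℝ` into a normed space is of Schwartz class if it is (the underlying function
of) a Schwartz map. -/
def IsSchwartz {E : Type*} [NormedAddCommGroup E] [NormedSpace ℝ E] (f : ℝ → E) : Prop :=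
  ∃ φ : SchwartzMap ℝ E, ⇑φ = f

variable {ι : Type*} [Fintype ι] [DecidableEq ι]

/-- The centralizer `u(n)_a = {y ∈ u(n) : [y,a] = 0}` of `a` in `u(n)`. -/
def uCent (a : Matrix ι ι ℂ) : Set (Matrix ι ι ℂ) :=
  {y | yᴴ = -y ∧ y * a = a * y}

/-- The orthogonal complement `u(n)_a^⊥` of `u(n)_a` in `u(n)` w.r.t. `⟨x,y⟩ = −tr(xy)`. -/
def uPerp (a : Matrix ι ι ℂ) : Set (Matrix ι ι ℂ) :=
  {y | yᴴ = -y ∧ ∀ z ∈ uCent a, -(y * z).trace = 0}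

/-- The orthogonal projection `π_a` of `u(n)` onto `u(n)_a` (for `a` diagonal): it keeps
exactly the entries `(i,j)` with `a i i = a j j`. -/
noncomputable def centProj (a y : Matrix ι ι ℂ) : Matrix ι ι ℂ :=
  Matrix.of fun i j => if a i i = a j j then y i j else 0

/-- The orthogonal projection `π_a^⊥` of `u(n)` onto `u(n)_a^⊥` (for `a` diagonal): it keeps
exactly the entries `(i,j)` with `a i i ≠ a j j`. -/
noncomputable def perpProj (a y : Matrix ι ι ℂ) : Matrix ι ι ℂ :=
  Matrix.of fun i j => if a i i = a j j then 0 else y i j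

/-- The integral operator `T_u(v)(x) = ∫_{−∞}^x π_a([u(y), v(y)]) dy`. -/
noncomputable def Tu (a : Matrix ι ι ℂ) (u v : ℝ → Matrix ι ι ℂ) (x : ℝ) : Matrix ι ι ℂ :=
  ∫ y in Set.Iic x, centProj a (u y * v y - v y * u y)

/-- The Poisson operator `P_u(v) = v_x + π_a^⊥([u,v]) − [u, T_u(v)]`. -/
noncomputable def Pu (a : Matrix ι ι ℂ) (u v : ℝ → Matrix ι ι ℂ) (x : ℝ) : Matrix ι ι ℂ :=
  deriv v x + perpProj a (u x * v x - v x * u x)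
    - (u x * Tu a u v x - Tu a u v x * u x)

/-! The energy `E(x) = tr(v²) + tr(T_u(v)²) = -(‖v‖² + ‖T_u(v)‖²)` is constant when `P_u(v) = 0`.
Differentiating, the `π_a^⊥`-term drops out because `v ⊥ u(n)_a`, the `π_a`-term turns into a full
commutator because `T_u(v) ∈ u(n)_a`, and what is left, `tr([u,T]v) + tr([u,v]T)`, vanishes by the
ad-invariance of the trace form. Since `v` and `T_u(v)` vanish at `-∞`, so does `E`; hence `E ≡ 0`
and `v ≡ 0`. -/

open scoped ComplexOrder Topology

section FiniteDimensional

variable {E F G : Type*} [NormedAddCommGroup E] [NormedSpace ℝ E] [FiniteDimensional ℝ E]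
  [NormedAddCommGroup F] [NormedSpace ℝ F] [FiniteDimensional ℝ F]
  [NormedAddCommGroup G] [NormedSpace ℝ G]

noncomputable def LinearMap.toContinuousLinearMap₂ (f : E →ₗ[ℝ] F →ₗ[ℝ] G) :
    E →L[ℝ] F →L[ℝ] G :=
  LinearMap.toContinuousLinearMap (LinearMap.toContinuousLinearMap.toLinearMap ∘ₗ f)

end FiniteDimensional

section RealFunctions

variable {E : Type*} [NormedAddCommGroup E] [NormedSpace ℝ E] {f : ℝ → E}

lemma hasDerivAt_setIntegral_Iic [CompleteSpace E] (hf : Integrable f) (hc : Continuous f)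
    (x : ℝ) : HasDerivAt (fun x => ∫ y in Set.Iic x, f y) (f x) x := by
  have h : ∀ x, ∫ y in Set.Iic x, f y = (∫ y in Set.Iic 0, f y) + ∫ y in (0:ℝ)..x, f y :=
    fun x => by
      rw [← intervalIntegral.integral_Iic_sub_Iic hf.integrableOn hf.integrableOn]; abel
  rw [funext h]
  exact (intervalIntegral.integral_hasDerivAt_right hf.intervalIntegrable
    (hc.stronglyMeasurableAtFilter _ _) hc.continuousAt).const_add _

lemma eq_zero_of_hasDerivAt_zero_of_tendsto_atBot (hf : ∀ x, HasDerivAt f 0 x)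
    (hlim : Tendsto f atBot (𝓝 0)) : f = 0 := by
  funext x
  have hconst : f = fun _ => f x :=
    funext fun y => is_const_of_deriv_eq_zero (fun z => (hf z).differentiableAt)
      (fun z => (hf z).deriv) y x
  exact tendsto_nhds_unique (hconst ▸ tendsto_const_nhds) hlim

lemma IsSchwartz.integrable (hf : IsSchwartz f) : Integrable f := by
  obtain ⟨φ, rfl⟩ := hf; exact φ.integrable

lemma IsSchwartz.continuous (hf : IsSchwartz f) : Continuous f := by
  obtain ⟨φ, rfl⟩ := hf; exact φ.continuous

lemma IsSchwartz.differentiable (hf : IsSchwartz f) : Differentiable ℝ f := by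
  obtain ⟨φ, rfl⟩ := hf; exact φ.differentiable

lemma IsSchwartz.tendsto_atBot (hf : IsSchwartz f) : Tendsto f atBot (𝓝 0) := by
  obtain ⟨φ, rfl⟩ := hf
  exact φ.toZeroAtInfty.zero_at_infty'.mono_left (by simp [cocompact_eq_atBot_atTop])

end RealFunctions

section

omit [DecidableEq ι]

/- The sup norm on matrices is only a local instance, and instance search reaches the product
topology `instTopologicalSpaceMatrix` first, which is not reducibly the norm topology. -/
noncomputable instance : ContinuousENorm (Matrix ι ι ℂ) := SeminormedAddGroup.toContinuousENorm

section MatrixAlgebra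

variable {R : Type*} [CommRing R]

lemma trace_commutator_mul_add_trace_commutator_mul (U V W : Matrix ι ι R) :
    ((U * W - W * U) * V).trace + ((U * V - V * U) * W).trace = 0 := by
  rw [Matrix.sub_mul, Matrix.sub_mul, Matrix.trace_sub, Matrix.trace_sub,
    Matrix.trace_mul_cycle U W V, ← Matrix.trace_mul_cycle U V W]
  abel

lemma trace_commutator_mul_self (U V : Matrix ι ι R) : ((U * V - V * U) * V).trace = 0 := by
  rw [Matrix.sub_mul, Matrix.trace_sub, Matrix.trace_mul_cycle U V V, sub_self]

lemma conjTranspose_commutator_of_skew [StarRing R] {U V : Matrix ι ι R} (hU : Uᴴ = -U)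
    (hV : Vᴴ = -V) : (U * V - V * U)ᴴ = -(U * V - V * U) := by
  simp only [Matrix.conjTranspose_sub, Matrix.conjTranspose_mul, hU, hV, Matrix.neg_mul,
    Matrix.mul_neg, neg_neg, neg_sub]

end MatrixAlgebra

lemma eq_zero_of_trace_mul_self_add_eq_zero {M N : Matrix ι ι ℂ} (hM : Mᴴ = -M) (hN : Nᴴ = -N)
    (h : (M * M).trace + (N * N).trace = 0) : M = 0 := by
  have h' : (Mᴴ * M).trace + (Nᴴ * N).trace = 0 := by
    rw [hM, hN, Matrix.neg_mul, Matrix.neg_mul, Matrix.trace_neg, Matrix.trace_neg, ← neg_add, h,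
      neg_zero]
  rw [← Matrix.trace_conjTranspose_mul_self_eq_zero_iff]
  exact ((add_eq_zero_iff_of_nonneg (Matrix.posSemidef_conjTranspose_mul_self M).trace_nonneg
    (Matrix.posSemidef_conjTranspose_mul_self N).trace_nonneg).1 h').1

noncomputable def matrixMulCLM : Matrix ι ι ℂ →L[ℝ] Matrix ι ι ℂ →L[ℝ] Matrix ι ι ℂ :=
  (LinearMap.mul ℝ (Matrix ι ι ℂ)).toContinuousLinearMap₂

lemma HasDerivAt.matrix_trace {M : ℝ → Matrix ι ι ℂ} {M' : Matrix ι ι ℂ} {x : ℝ}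
    (hM : HasDerivAt M M' x) : HasDerivAt (fun t => (M t).trace) M'.trace x :=
  (Matrix.traceLinearMap ι ℝ ℂ).toContinuousLinearMap.hasFDerivAt.comp_hasDerivAt x hM

lemma HasDerivAt.trace_mul_self {M : ℝ → Matrix ι ι ℂ} {M' : Matrix ι ι ℂ} {x : ℝ}
    (hM : HasDerivAt M M' x) :
    HasDerivAt (fun t => (M t * M t).trace) (2 * (M' * M x).trace) x := by
  have h : HasDerivAt (fun t => (M t * M t).trace) (M x * M' + M' * M x).trace x :=
    (matrixMulCLM.hasDerivAt_of_bilinear (fun _ => hM) (fun _ => hM)).matrix_trace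
  rwa [Matrix.trace_add, Matrix.trace_mul_comm (M x), ← two_mul] at h

lemma conjTranspose_integral {X : Type*} [MeasurableSpace X] {μ : Measure X}
    (f : X → Matrix ι ι ℂ) : (∫ x, f x ∂μ)ᴴ = ∫ x, (f x)ᴴ ∂μ :=
  ((starL' ℝ).integral_comp_comm f).symm

section Projections

variable (a : Matrix ι ι ℂ)

omit [Fintype ι] in
lemma perpProj_eq_sub (y : Matrix ι ι ℂ) : perpProj a y = y - centProj a y := by
  ext i j
  by_cases h : a i i = a j j <;> simp [centProj, perpProj, h]

omit [Fintype ι] in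
lemma centProj_centProj (y : Matrix ι ι ℂ) : centProj a (centProj a y) = centProj a y := by
  ext i j
  by_cases h : a i i = a j j <;> simp [centProj, h]

omit [Fintype ι] in
lemma conjTranspose_centProj (y : Matrix ι ι ℂ) : (centProj a y)ᴴ = centProj a yᴴ := by
  ext i j
  by_cases h : a i i = a j j <;> simp [centProj, h, eq_comm]

omit [Fintype ι] in
lemma centProj_neg (y : Matrix ι ι ℂ) : centProj a (-y) = -centProj a y := by
  ext i j
  by_cases h : a i i = a j j <;> simp [centProj, h]

lemma trace_centProj_mul (y z : Matrix ι ι ℂ) :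
    (centProj a y * z).trace = (y * centProj a z).trace := by
  simp only [Matrix.trace, Matrix.diag, Matrix.mul_apply, centProj, Matrix.of_apply, ite_mul,
    mul_ite, zero_mul, mul_zero, eq_comm]

noncomputable def centProjCLM : Matrix ι ι ℂ →L[ℝ] Matrix ι ι ℂ :=
  LinearMap.toContinuousLinearMap
    { toFun := centProj a
      map_add' := fun y z => by ext i j; by_cases h : a i i = a j j <;> simp [centProj, h]
      map_smul' := fun c y => by ext i j; by_cases h : a i i = a j j <;> simp [centProj, h] }

lemma centProj_integral {X : Type*} [MeasurableSpace X] {μ : Measure X}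
    {f : X → Matrix ι ι ℂ} (hf : Integrable f μ) :
    centProj a (∫ x, f x ∂μ) = ∫ x, centProj a (f x) ∂μ :=
  ((centProjCLM a).integral_comp_comm hf).symm

variable {a}

lemma centProj_mem_uCent (ha : a.IsDiag) {y : Matrix ι ι ℂ} (hy : yᴴ = -y) :
    centProj a y ∈ uCent a := by
  refine ⟨by rw [conjTranspose_centProj, hy, centProj_neg], ?_⟩
  rw [← ha.diagonal_diag]
  ext i j
  by_cases h : a i i = a j j <;> simp [centProj, h, mul_comm]

/- Testing `y ⊥ u(n)_a` against `π_a y ∈ u(n)_a` gives `tr((π_a y)ᴴ π_a y) = 0`. -/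
lemma centProj_eq_zero_of_mem_uPerp (ha : a.IsDiag) {y : Matrix ι ι ℂ} (hy : y ∈ uPerp a) :
    centProj a y = 0 := by
  have h0 := hy.2 _ (centProj_mem_uCent ha hy.1)
  rw [← centProj_centProj a y, ← trace_centProj_mul] at h0
  rw [← Matrix.trace_conjTranspose_mul_self_eq_zero_iff, conjTranspose_centProj, hy.1,
    centProj_neg]
  simpa [Matrix.neg_mul] using h0

end Projections

section Poisson

variable {a : Matrix ι ι ℂ} {u v : ℝ → Matrix ι ι ℂ}

lemma isSchwartz_centProj_commutator (hu : IsSchwartz u) (hv : IsSchwartz v) :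
    IsSchwartz fun y => centProj a (u y * v y - v y * u y) := by
  obtain ⟨φu, rfl⟩ := hu
  obtain ⟨φv, rfl⟩ := hv
  exact ⟨SchwartzMap.pairing
    (ContinuousLinearMap.compL ℝ _ _ _ (centProjCLM a) ∘L
      (matrixMulCLM - (matrixMulCLM (ι := ι)).flip)) φu φv, rfl⟩

lemma hasDerivAt_Tu (hu : IsSchwartz u) (hv : IsSchwartz v) (x : ℝ) :
    HasDerivAt (Tu a u v) (centProj a (u x * v x - v x * u x)) x :=
  have h := isSchwartz_centProj_commutator (a := a) hu hv
  hasDerivAt_setIntegral_Iic h.integrable h.continuous x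

lemma tendsto_Tu_atBot : Tendsto (Tu a u v) atBot (𝓝 0) :=
  tendsto_integral_Iic_zero tendsto_id

lemma centProj_Tu (hu : IsSchwartz u) (hv : IsSchwartz v) (x : ℝ) :
    centProj a (Tu a u v x) = Tu a u v x := by
  rw [Tu, centProj_integral _ (isSchwartz_centProj_commutator hu hv).integrable.integrableOn]
  simp_rw [centProj_centProj]

lemma conjTranspose_Tu (hu : ∀ y, (u y)ᴴ = -u y) (hv : ∀ y, (v y)ᴴ = -v y) (x : ℝ) :
    (Tu a u v x)ᴴ = -Tu a u v x := by
  rw [Tu, conjTranspose_integral, ← integral_neg]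
  simp_rw [conjTranspose_centProj, conjTranspose_commutator_of_skew (hu _) (hv _), centProj_neg]

lemma hasDerivAt_of_Pu_eq_zero {x : ℝ} (hv : DifferentiableAt ℝ v x) (h : Pu a u v x = 0) :
    HasDerivAt v (u x * Tu a u v x - Tu a u v x * u x - perpProj a (u x * v x - v x * u x)) x := by
  rw [Pu, sub_eq_zero, ← eq_sub_iff_add_eq] at h
  exact h ▸ hv.hasDerivAt

noncomputable def poissonEnergy (a : Matrix ι ι ℂ) (u v : ℝ → Matrix ι ι ℂ) (x : ℝ) : ℂ :=
  (v x * v x).trace + (Tu a u v x * Tu a u v x).trace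

lemma trace_poissonEnergy_deriv_eq_zero (ha : a.IsDiag) {U V W : Matrix ι ι ℂ}
    (hV : V ∈ uPerp a) (hW : centProj a W = W) :
    ((U * W - W * U - perpProj a (U * V - V * U)) * V).trace
      + (centProj a (U * V - V * U) * W).trace = 0 := by
  set C := U * V - V * U
  have hperp : (perpProj a C * V).trace = (C * V).trace := by
    rw [perpProj_eq_sub, Matrix.sub_mul, Matrix.trace_sub, trace_centProj_mul,
      centProj_eq_zero_of_mem_uPerp ha hV, Matrix.mul_zero, Matrix.trace_zero, sub_zero]
  rw [Matrix.sub_mul, Matrix.trace_sub, hperp, trace_commutator_mul_self, sub_zero,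
    trace_centProj_mul, hW]
  exact trace_commutator_mul_add_trace_commutator_mul U V W

lemma hasDerivAt_poissonEnergy (ha : a.IsDiag) (hu : IsSchwartz u) (hv : IsSchwartz v)
    (hvP : ∀ x, v x ∈ uPerp a) (hPu : ∀ x, Pu a u v x = 0) (x : ℝ) :
    HasDerivAt (poissonEnergy a u v) 0 x := by
  have h := (hasDerivAt_of_Pu_eq_zero (hv.differentiable x) (hPu x)).trace_mul_self.add
    (hasDerivAt_Tu (a := a) hu hv x).trace_mul_self
  rwa [← mul_add, trace_poissonEnergy_deriv_eq_zero ha (hvP x) (centProj_Tu hu hv x),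
    mul_zero] at h

lemma tendsto_poissonEnergy_atBot (hv : IsSchwartz v) :
    Tendsto (poissonEnergy a u v) atBot (𝓝 0) := by
  have hc : Continuous fun M : Matrix ι ι ℂ => (M * M).trace :=
    (continuous_id.matrix_mul continuous_id).matrix_trace
  unfold poissonEnergy
  simpa using ((hc.tendsto 0).comp hv.tendsto_atBot).add
    ((hc.tendsto 0).comp (tendsto_Tu_atBot (a := a) (u := u) (v := v)))

end Poisson

end

theorem stmt8_general (n : ℕ)
    (a : Matrix (Fin n) (Fin n) ℂ) (haDiag : a.IsDiag)
    (u v : ℝ → Matrix (Fin n) (Fin n) ℂ)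
    (huS : IsSchwartz u) (hvS : IsSchwartz v)
    (huP : ∀ x, u x ∈ uPerp a) (hvP : ∀ x, v x ∈ uPerp a)
    (hPu : ∀ x, Pu a u v x = 0) :
    v = 0 := by
  have hE : poissonEnergy a u v = 0 :=
    eq_zero_of_hasDerivAt_zero_of_tendsto_atBot
      (hasDerivAt_poissonEnergy haDiag huS hvS hvP hPu) (tendsto_poissonEnergy_atBot hvS)
  funext x
  exact eq_zero_of_trace_mul_self_add_eq_zero (hvP x).1
    (conjTranspose_Tu (fun y => (huP y).1) (fun y => (hvP y).1) x) (congrFun hE x)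

/-- Injectivity of the Poisson operator: for `a ∈ u(n)` diagonal and
Schwartz-class `u, v : ℝ → u(n)_a^⊥`, if `P_u(v) = 0` identically then `v = 0`. -/
theorem stmt8 (n : ℕ)
    (a : Matrix (Fin n) (Fin n) ℂ) (haDiag : a.IsDiag) (haSkew : aᴴ = -a)
    (u v : ℝ → Matrix (Fin n) (Fin n) ℂ)
    (huS : IsSchwartz u) (hvS : IsSchwartz v)
    (huP : ∀ x, u x ∈ uPerp a) (hvP : ∀ x, v x ∈ uPerp a)
    (hPu : ∀ x, Pu a u v x = 0) :
    v = 0 :=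
  stmt8_general n a haDiag u v huS hvS huP hvP hPu
end

section
/- (Poisson operator and the AKNS recursion.) Let a ∈ u(n) be a fixed diagonal matrix, let u : ℝ → u(n)_a^⊥ be of Schwartz class, and let Q, R : ℝ → u(n) be smooth maps such that Q_x + [u, Q] = [R, a] pointwise, Q(x) → 0 as x → −∞, and π_a^⊥(Q) is of Schwartz class. Then P_u(π_a^⊥(Q)) = [R, a]. -/
open Matrix Filter MeasureTheory
open scoped Classical

attribute [local instance] Matrix.normedAddCommGroup Matrix.normedSpace

variable {ι : Type*} [Fintype ι] [DecidableEq ι]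

/-!
Split `Q = π_a Q + π_a^⊥ Q`. Since `a` is diagonal, `π_a` kills `[R, a]`, and since `u` takes
values in `u(n)_a^⊥`, it also kills `[u, π_a Q]`. Applying `π_a` to `Q_x + [u, Q] = [R, a]`
therefore gives `(π_a Q)_x = -π_a [u, π_a^⊥ Q]`, and as `π_a Q → 0` at `-∞` integration yields
`T_u(π_a^⊥ Q) = -π_a Q`. Substituting this into `P_u(π_a^⊥ Q)` collapses it to
`Q_x + [u, Q] = [R, a]`.
-/

section Projections

omit [DecidableEq ι]

omit [Fintype ι] in
lemma centProj_add_perpProj (a y : Matrix ι ι ℂ) : centProj a y + perpProj a y = y := by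
  ext i j
  simp only [centProj, perpProj, Matrix.add_apply, of_apply]
  split_ifs <;> simp

noncomputable def centProjL (a : Matrix ι ι ℂ) : Matrix ι ι ℂ →L[ℝ] Matrix ι ι ℂ :=
  LinearMap.toContinuousLinearMap
    { toFun := centProj a
      map_add' := fun x y => by
        ext i j
        simp only [centProj, Matrix.add_apply, of_apply]
        split_ifs <;> simp
      map_smul' := fun r x => by
        ext i j
        simp only [centProj, Matrix.smul_apply, of_apply, RingHom.id_apply]
        split_ifs <;> simp }

@[simp] lemma centProjL_apply (a y : Matrix ι ι ℂ) : centProjL a y = centProj a y := rfl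

lemma centProj_add (a x y : Matrix ι ι ℂ) : centProj a (x + y) = centProj a x + centProj a y :=
  map_add (centProjL a) x y

lemma centProj_sub (a x y : Matrix ι ι ℂ) : centProj a (x - y) = centProj a x - centProj a y :=
  map_sub (centProjL a) x y

lemma centProj_perpProj_mul_centProj (a X Y : Matrix ι ι ℂ) :
    centProj a (perpProj a X * centProj a Y) = 0 := by
  ext i j
  simp only [centProj, perpProj, of_apply, mul_apply, Matrix.zero_apply]
  split_ifs with h
  · exact Finset.sum_eq_zero fun k _ => by split_ifs <;> simp_all
  · rfl

lemma centProj_centProj_mul_perpProj (a X Y : Matrix ι ι ℂ) :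
    centProj a (centProj a X * perpProj a Y) = 0 := by
  ext i j
  simp only [centProj, perpProj, of_apply, mul_apply, Matrix.zero_apply]
  split_ifs with h
  · exact Finset.sum_eq_zero fun k _ => by split_ifs <;> simp_all
  · rfl

end Projections

section DiagonalCommutator

lemma commutator_apply_of_isDiag {a : Matrix ι ι ℂ} (ha : a.IsDiag) (X : Matrix ι ι ℂ)
    (i j : ι) :
    (X * a - a * X) i j = (a j j - a i i) * X i j := by
  obtain ⟨d, rfl⟩ : ∃ d, a = diagonal d := ⟨_, ha.diagonal_diag.symm⟩
  rw [Matrix.sub_apply, mul_diagonal, diagonal_mul, diagonal_apply_eq, diagonal_apply_eq]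
  ring

lemma centProj_commutator_eq_zero_of_isDiag {a : Matrix ι ι ℂ} (ha : a.IsDiag)
    (R : Matrix ι ι ℂ) :
    centProj a (R * a - a * R) = 0 := by
  ext i j
  simp only [centProj, of_apply, commutator_apply_of_isDiag ha, Matrix.zero_apply]
  split_ifs with h <;> simp [h]

lemma single_sub_single_star_mem_uCent {a : Matrix ι ι ℂ} (ha : a.IsDiag) {i j : ι}
    (hij : a i i = a j j) (c : ℂ) : single i j c - single j i (star c) ∈ uCent a := by
  refine ⟨by simp [conjTranspose_sub], ?_⟩
  rw [← sub_eq_zero]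
  ext p q
  rw [commutator_apply_of_isDiag ha, Matrix.zero_apply, Matrix.sub_apply, single_apply,
    single_apply]
  split_ifs with h₁ h₂ h₂
  · obtain ⟨rfl, rfl⟩ := h₁
    simp [hij]
  · obtain ⟨rfl, rfl⟩ := h₁
    simp [hij]
  · obtain ⟨rfl, rfl⟩ := h₂
    simp [hij]
  · simp

lemma apply_eq_zero_of_mem_uPerp {a y : Matrix ι ι ℂ} (ha : a.IsDiag) (hy : y ∈ uPerp a)
    {i j : ι} (hij : a i i = a j j) : y i j = 0 := by
  have hz (c : ℂ) : c * y j i - starRingEnd ℂ c * y i j = 0 := by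
    have := hy.2 _ (single_sub_single_star_mem_uCent ha hij c)
    simp [mul_sub, trace_mul_single, sub_eq_zero] at this
    linear_combination -this
  have h1 := hz 1
  have hI := hz Complex.I
  simp only [Complex.conj_I, one_mul, map_one] at h1 hI
  have : Complex.I * (2 * y i j) = 0 := by linear_combination hI - Complex.I * h1
  simpa [Complex.I_ne_zero] using this

lemma perpProj_eq_self_of_mem_uPerp {a y : Matrix ι ι ℂ} (ha : a.IsDiag) (hy : y ∈ uPerp a) :
    perpProj a y = y := by
  ext i j
  simp only [perpProj, of_apply]
  split_ifs with h
  · exact (apply_eq_zero_of_mem_uPerp ha hy h).symm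
  · rfl

lemma hasDerivAt_centProj_of_recursion {a : Matrix ι ι ℂ} (ha : a.IsDiag)
    {u Q : ℝ → Matrix ι ι ℂ} {R : Matrix ι ι ℂ} {t : ℝ} (hu : u t ∈ uPerp a)
    (hQ : DifferentiableAt ℝ Q t) (hrec : deriv Q t + (u t * Q t - Q t * u t) = R * a - a * R) :
    HasDerivAt (fun y => centProj a (Q y))
      (-centProj a (u t * perpProj a (Q t) - perpProj a (Q t) * u t)) t := by
  have hcent : centProj a (u t * centProj a (Q t) - centProj a (Q t) * u t) = 0 := by
    rw [← perpProj_eq_self_of_mem_uPerp ha hu, centProj_sub, centProj_perpProj_mul_centProj,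
      centProj_centProj_mul_perpProj, sub_zero]
  have hsplit : u t * Q t - Q t * u t = (u t * centProj a (Q t) - centProj a (Q t) * u t)
      + (u t * perpProj a (Q t) - perpProj a (Q t) * u t) := by
    conv_lhs => rw [← centProj_add_perpProj a (Q t)]
    noncomm_ring
  have hQ' : centProj a (deriv Q t)
      = -centProj a (u t * perpProj a (Q t) - perpProj a (Q t) * u t) := by
    rw [eq_sub_of_add_eq hrec, hsplit, centProj_sub, centProj_add,
      centProj_commutator_eq_zero_of_isDiag ha, hcent, zero_add, zero_sub]
  rw [← hQ']
  exact (centProjL a).hasFDerivAt.comp_hasDerivAt t hQ.hasDerivAt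

end DiagonalCommutator

section Integration

omit [DecidableEq ι]

lemma norm_centProj_le (a y : Matrix ι ι ℂ) : ‖centProj a y‖ ≤ ‖y‖ := by
  refine (norm_le_iff (norm_nonneg y)).2 fun i j => ?_
  simp only [centProj, of_apply]
  split_ifs
  · exact norm_entry_le_entrywise_sup_norm y
  · simp

lemma norm_mul_le_card_mul (A B : Matrix ι ι ℂ) :
    ‖A * B‖ ≤ Fintype.card ι * ‖A‖ * ‖B‖ := by
  refine (norm_le_iff (by positivity)).2 fun i j => ?_
  calc ‖(A * B) i j‖ ≤ ∑ k, ‖A i k * B k j‖ := by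
        rw [mul_apply]
        exact norm_sum_le _ _
    _ ≤ ∑ _k : ι, ‖A‖ * ‖B‖ := by
        gcongr
        rw [norm_mul]
        gcongr <;> exact norm_entry_le_entrywise_sup_norm _
    _ = Fintype.card ι * ‖A‖ * ‖B‖ := by
        rw [Finset.sum_const, Finset.card_univ, nsmul_eq_mul, mul_assoc]

/- `Matrix.normedAddCommGroup` is only a local instance whose topology is not syntactically the
product topology of `Matrix`, so `Integrable` and a.e.-strong measurability need these bridges. -/
noncomputable instance inst_s12 : ContinuousENorm (Matrix ι ι ℂ) := SeminormedAddGroup.toContinuousENorm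

instance : TopologicalSpace.PseudoMetrizableSpace (Matrix ι ι ℂ) :=
  inferInstanceAs (TopologicalSpace.PseudoMetrizableSpace (ι → ι → ℂ))

lemma integrable_centProj_commutator (a : Matrix ι ι ℂ) {u v : ℝ → Matrix ι ι ℂ}
    (hu : Continuous u) {C : ℝ} (huC : ∀ t, ‖u t‖ ≤ C) (hv : Integrable v) :
    Integrable fun t => centProj a (u t * v t - v t * u t) := by
  refine (hv.norm.const_mul (2 * Fintype.card ι * C)).mono' ?_ (ae_of_all _ fun t => ?_)
  · exact (centProjL a).continuous.comp_aestronglyMeasurable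
      ((hu.aestronglyMeasurable.mul hv.1).sub (hv.1.mul hu.aestronglyMeasurable))
  · calc ‖centProj a (u t * v t - v t * u t)‖ ≤ ‖u t * v t‖ + ‖v t * u t‖ :=
          (norm_centProj_le _ _).trans (norm_sub_le _ _)
      _ ≤ Fintype.card ι * ‖u t‖ * ‖v t‖ + Fintype.card ι * ‖v t‖ * ‖u t‖ :=
          add_le_add (norm_mul_le_card_mul _ _) (norm_mul_le_card_mul _ _)
      _ ≤ Fintype.card ι * C * ‖v t‖ + Fintype.card ι * ‖v t‖ * C := by
          gcongr <;> exact huC t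
      _ = 2 * Fintype.card ι * C * ‖v t‖ := by ring

lemma Tu_eq_neg_of_hasDerivAt {a : Matrix ι ι ℂ} {u v W : ℝ → Matrix ι ι ℂ} {x : ℝ}
    (hW : ∀ t ≤ x, HasDerivAt W (-centProj a (u t * v t - v t * u t)) t)
    (hW_bot : Tendsto W atBot (nhds 0))
    (hint : IntegrableOn (fun t => centProj a (u t * v t - v t * u t)) (Set.Iic x)) :
    Tu a u v x = -W x := by
  have hW_bot' := hW_bot.neg
  rw [neg_zero] at hW_bot'
  have := integral_Iic_of_hasDerivAt_of_tendsto' (f := -W)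
    (fun t ht => by simpa only [neg_neg] using (hW t ht).neg) hint hW_bot'
  simpa [Tu] using this

lemma Pu_perpProj_eq_deriv_add_commutator {a : Matrix ι ι ℂ} {u Q : ℝ → Matrix ι ι ℂ}
    {x : ℝ}
    (hQ : DifferentiableAt ℝ Q x)
    (hw : HasDerivAt (fun y => centProj a (Q y))
      (-centProj a (u x * perpProj a (Q x) - perpProj a (Q x) * u x)) x)
    (hT : Tu a u (fun y => perpProj a (Q y)) x = -centProj a (Q x)) :
    Pu a u (fun y => perpProj a (Q y)) x = deriv Q x + (u x * Q x - Q x * u x) := by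
  have hv : HasDerivAt (fun y => perpProj a (Q y))
      (deriv Q x + centProj a (u x * perpProj a (Q x) - perpProj a (Q x) * u x)) x := by
    have hsub : (fun y => perpProj a (Q y)) = fun y => Q y - centProj a (Q y) :=
      funext fun y => eq_sub_of_add_eq' (centProj_add_perpProj a (Q y))
    rw [hsub, ← sub_neg_eq_add]
    exact hQ.hasDerivAt.sub hw
  -- `Pu` states `deriv` with the product-space instances of `Matrix`, hence the restatement.
  have hv' : deriv (fun y => perpProj a (Q y)) x
      = deriv Q x + centProj a (u x * perpProj a (Q x) - perpProj a (Q x) * u x) := hv.deriv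
  rw [Pu, hv', hT, add_assoc, centProj_add_perpProj]
  conv_rhs => rw [← centProj_add_perpProj a (Q x)]
  noncomm_ring

end Integration

theorem stmt12_general (n : ℕ)
    (a : Matrix (Fin n) (Fin n) ℂ) (haDiag : a.IsDiag)
    (u : ℝ → Matrix (Fin n) (Fin n) ℂ)
    (huS : IsSchwartz u) (huP : ∀ x, u x ∈ uPerp a)
    (Q R : ℝ → Matrix (Fin n) (Fin n) ℂ)
    (hQ : ContDiff ℝ (⊤ : ℕ∞) Q)
    (hrec : ∀ x, deriv Q x + (u x * Q x - Q x * u x) = R x * a - a * R x)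
    (hQlim : Tendsto Q atBot (nhds 0))
    (hQS : IsSchwartz (fun x => perpProj a (Q x))) :
    ∀ x, Pu a u (fun y => perpProj a (Q y)) x = R x * a - a * R x := by
  obtain ⟨φ, rfl⟩ := huS
  obtain ⟨ψ, hψ⟩ := hQS
  have hQd : Differentiable ℝ Q := hQ.differentiable (by simp)
  have hw t := hasDerivAt_centProj_of_recursion haDiag (huP t) (hQd t) (hrec t)
  have hw_bot : Tendsto (fun y => centProj a (Q y)) atBot (nhds 0) := by
    have h := ((centProjL a).continuous.tendsto 0).comp hQlim
    rwa [map_zero] at h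
  have hint : Integrable fun t => centProj a (φ t * perpProj a (Q t) - perpProj a (Q t) * φ t) :=
    integrable_centProj_commutator a φ.continuous (SchwartzMap.norm_le_seminorm ℝ φ)
      (hψ ▸ ψ.integrable)
  intro x
  rw [Pu_perpProj_eq_deriv_add_commutator (hQd x) (hw x)
    (Tu_eq_neg_of_hasDerivAt (fun t _ => hw t) hw_bot hint.integrableOn), hrec x]

/-- Poisson operator and the AKNS recursion: for `a ∈ u(n)` diagonal,
`u : ℝ → u(n)_a^⊥` of Schwartz class, and smooth `Q, R : ℝ → u(n)` with
`Q_x + [u,Q] = [R,a]`, `Q → 0` at `−∞` and `π_a^⊥(Q)` of Schwartz class, one has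
`P_u(π_a^⊥(Q)) = [R, a]`. -/
theorem stmt12 (n : ℕ)
    (a : Matrix (Fin n) (Fin n) ℂ) (haDiag : a.IsDiag) (haSkew : aᴴ = -a)
    (u : ℝ → Matrix (Fin n) (Fin n) ℂ)
    (huS : IsSchwartz u) (huP : ∀ x, u x ∈ uPerp a)
    (Q R : ℝ → Matrix (Fin n) (Fin n) ℂ)
    (hQ : ContDiff ℝ (⊤ : ℕ∞) Q) (hR : ContDiff ℝ (⊤ : ℕ∞) R)
    (hQu : ∀ x, (Q x)ᴴ = -(Q x)) (hRu : ∀ x, (R x)ᴴ = -(R x))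
    (hrec : ∀ x, deriv Q x + (u x * Q x - Q x * u x) = R x * a - a * R x)
    (hQlim : Tendsto Q atBot (nhds 0))
    (hQS : IsSchwartz (fun x => perpProj a (Q x))) :
    ∀ x, Pu a u (fun y => perpProj a (Q y)) x = R x * a - a * R x :=
  stmt12_general n a haDiag u huS huP Q R hQ hrec hQlim hQS
end
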